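/- An algebra A is exactly correctable for a channel N with Kraus operators {E_i} (i.e., there exists a channel R with (R∘N)†(a) = a for all a ∈ A) if and only if every a ∈ A commutes with E_i† E_j for all i, j; equivalently, A is contained in the commutant of the algebra generated by {E_i† E_j}. -/

import Mathlib

open Matrix Kronecker MeasureTheory
open scoped ComplexOrder

noncomputable section

/-- Square complex matrices of size `n`. -/
abbrev Mat (n : ℕ) := Matrix (Fin n) (Fin n) ℂ

/-- Operator norm (spectral norm) of a square matrix. -/
noncomputable def opNorm {m : Type*} [Fintype m] [DecidableEq m]
    (A : Matrix m m ℂ) : ℝ :=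
  ‖Matrix.toEuclideanCLM (𝕜 := ℂ) A‖

/-- Trace norm of a square matrix. -/
noncomputable def traceNorm {m : Type*} [Fintype m] [DecidableEq m]
    (A : Matrix m m ℂ) : ℝ :=
  (((Matrix.posSemidef_conjTranspose_mul_self A).1.eigenvectorUnitary : Matrix m m ℂ) *
    diagonal (((↑) : ℝ → ℂ) ∘ (√·) ∘ (Matrix.posSemidef_conjTranspose_mul_self A).1.eigenvalues) *
    (star (Matrix.posSemidef_conjTranspose_mul_self A).1.eigenvectorUnitary : Matrix m m ℂ)).trace.re

/-- Trivial extension `Φ ⊗ id` of a map on matrices, defined entrywise. -/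
def extendId {a b : ℕ} (Φ : Mat a → Mat b) (m : ℕ)
    (M : Matrix (Fin a × Fin m) (Fin a × Fin m) ℂ) :
    Matrix (Fin b × Fin m) (Fin b × Fin m) ℂ :=
  Matrix.of fun r c => Φ (Matrix.of fun p q => M (p, r.2) (q, c.2)) r.1 c.1

/-- Diamond norm of a (difference of) map(s) `Mat a → Mat b`, with ancilla of
dimension equal to the input dimension. -/
noncomputable def dnorm {a b : ℕ} (Φ : Mat a → Mat b) : ℝ :=
  ⨆ ρ : {ρ : Matrix (Fin a × Fin a) (Fin a × Fin a) ℂ // ρ.PosSemidef ∧ ρ.trace = 1},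
    traceNorm (extendId Φ a ρ.1)

/-- A map is a quantum channel (CPTP) iff it admits a Kraus representation. -/
def IsCPTP {a b : ℕ} (Φ : Mat a → Mat b) : Prop :=
  ∃ (κ : ℕ) (K : Fin κ → Matrix (Fin b) (Fin a) ℂ),
    (∀ ρ, Φ ρ = ∑ i, K i * ρ * (K i)ᴴ) ∧ (∑ i, (K i)ᴴ * K i = 1)

/-- `Nh` is a complementary channel of `N` (with environment of dimension `e`). -/
def IsComplementary {a b e : ℕ} (N : Mat a → Mat b) (Nh : Mat a → Mat e) : Prop :=
  ∃ K : Fin e → Matrix (Fin b) (Fin a) ℂ,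
    (∀ ρ, N ρ = ∑ i, K i * ρ * (K i)ᴴ) ∧ (∑ i, (K i)ᴴ * K i = 1) ∧
    (∀ ρ, Nh ρ = Matrix.of fun i j => (K i * ρ * (K j)ᴴ).trace)

/-- The commutant of a set of matrices. -/
def commutant {n : ℕ} (A : Set (Mat n)) : Set (Mat n) :=
  {X | ∀ a ∈ A, a * X = X * a}

/-- `P` is the Hilbert–Schmidt-orthogonal projection onto the set `S`. -/
def IsHSProjectionOnto {n : ℕ} (P : Mat n → Mat n) (S : Set (Mat n)) : Prop :=
  (∀ X, P X ∈ S) ∧ (∀ X ∈ S, P X = X) ∧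
  (∀ X Y, ((P X)ᴴ * Y).trace = (Xᴴ * P Y).trace)

end

/-!
For `(⇒)`: if `K` are Kraus operators of `R`, the Heisenberg-picture map of `R ∘ N`, with Kraus
operators `Kₗ Eᵢ`, fixes every `b ∈ A`. For such a unital map `Φ` the commutators `Cᵢ = Fᵢᴴ b - b Fᵢᴴ`
satisfy `∑ Cᵢ Cᵢᴴ = Φ(b bᴴ) - Φ(b) bᴴ - b Φ(bᴴ) + b Φ(1) bᴴ = 0`, so every Kraus operator `Kₗ Eᵢ`
commutes with `A`, and hence so does `Eᵢᴴ Eⱼ = ∑ₗ (Kₗ Eᵢ)ᴴ (Kₗ Eⱼ)`.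

For `(⇐)`: let `Q = ∑ Eᵢ Eᵢᴴ`, `G` the square root of its pseudo-inverse and `P = G Q G` its support
projection. The recovery with Kraus operators `Eᵢᴴ G` and `1 - P` is a channel. If `a` commutes with
all `Eᵢᴴ Eⱼ`, then `N(a) = ∑ Eᵢ a Eᵢᴴ` commutes with `Q`, hence with `G`, and the Heisenberg picture
of `R ∘ N` sends `a` to `a ∑ Eⱼᴴ P Eⱼ = a`.
-/

section Kraus

variable {ι κ n R : Type*} [Fintype ι] [Fintype κ] [Fintype n]

section CommSemiring

variable [CommSemiring R] [StarRing R]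

def krausMap (F : ι → Matrix n n R) (ρ : Matrix n n R) : Matrix n n R :=
  ∑ i, F i * ρ * (F i)ᴴ

def krausDual (F : ι → Matrix n n R) (b : Matrix n n R) : Matrix n n R :=
  ∑ i, (F i)ᴴ * b * F i

theorem trace_krausMap_mul (F : ι → Matrix n n R) (ρ b : Matrix n n R) :
    (krausMap F ρ * b).trace = (ρ * krausDual F b).trace := by
  simp only [krausMap, krausDual, Finset.sum_mul, Finset.mul_sum, trace_sum]
  refine Finset.sum_congr rfl fun i _ => ?_
  rw [mul_assoc, mul_assoc, trace_mul_comm]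
  simp only [mul_assoc]

theorem krausDual_krausDual (K : κ → Matrix n n R) (E : ι → Matrix n n R) (b : Matrix n n R) :
    krausDual E (krausDual K b) = krausDual (fun p : κ × ι => K p.1 * E p.2) b := by
  simp only [krausDual, Finset.mul_sum, Finset.sum_mul, Fintype.sum_prod_type,
    conjTranspose_mul, mul_assoc]
  exact Finset.sum_comm

theorem krausDual_add (F : ι → Matrix n n R) (b c : Matrix n n R) :
    krausDual F (b + c) = krausDual F b + krausDual F c := by
  simp only [krausDual, mul_add, add_mul, Finset.sum_add_distrib]

theorem forall_trace_krausMap_krausMap_mul_eq_iff (K : κ → Matrix n n R) (E : ι → Matrix n n R)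
    (a : Matrix n n R) :
    (∀ ρ, (krausMap K (krausMap E ρ) * a).trace = (ρ * a).trace) ↔
      krausDual E (krausDual K a) = a := by
  simp only [trace_krausMap_mul]
  exact ext_iff_trace_mul_left.symm

theorem commute_krausMap_krausMap_one [DecidableEq n] {E : ι → Matrix n n R} {a : Matrix n n R}
    (ha : ∀ i j, Commute a ((E i)ᴴ * E j)) : Commute (krausMap E a) (krausMap E 1) := by
  simp only [Commute, SemiconjBy, krausMap, mul_one, Finset.sum_mul, Finset.mul_sum]
  refine Finset.sum_congr rfl fun j _ => Finset.sum_congr rfl fun i _ => ?_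
  calc E i * a * (E i)ᴴ * (E j * (E j)ᴴ) = E i * (a * ((E i)ᴴ * E j)) * (E j)ᴴ := by
        simp only [mul_assoc]
    _ = E i * (E i)ᴴ * (E j * a * (E j)ᴴ) := by rw [ha i j]; simp only [mul_assoc]

theorem krausDual_krausMap_mul [DecidableEq n] {E : ι → Matrix n n R} {a : Matrix n n R}
    (ha : ∀ i j, Commute a ((E i)ᴴ * E j)) (Y : Matrix n n R) :
    krausDual E (krausMap E a * Y) = a * krausDual E (krausMap E 1 * Y) := by
  simp only [krausDual, krausMap, mul_one, Finset.sum_mul, Finset.mul_sum]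
  refine Finset.sum_congr rfl fun j _ => Finset.sum_congr rfl fun i _ => ?_
  calc (E j)ᴴ * (E i * a * (E i)ᴴ * Y) * E j = ((E j)ᴴ * E i * a) * ((E i)ᴴ * Y * E j) := by
        simp only [mul_assoc]
    _ = a * ((E j)ᴴ * (E i * (E i)ᴴ * Y) * E j) := by rw [← ha j i]; simp only [mul_assoc]

end CommSemiring

theorem sum_commutator_mul_conjTranspose [CommRing R] [StarRing R] [DecidableEq n]
    (F : ι → Matrix n n R) (b : Matrix n n R) :
    ∑ i, ((F i)ᴴ * b - b * (F i)ᴴ) * ((F i)ᴴ * b - b * (F i)ᴴ)ᴴ =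
      krausDual F (b * bᴴ) - krausDual F b * bᴴ - b * krausDual F bᴴ + b * krausDual F 1 * bᴴ := by
  simp only [krausDual, conjTranspose_sub, conjTranspose_mul, conjTranspose_conjTranspose,
    Finset.mul_sum, Finset.sum_mul, ← Finset.sum_sub_distrib, ← Finset.sum_add_distrib]
  refine Finset.sum_congr rfl fun i _ => ?_
  noncomm_ring

end Kraus

section Positivity

variable {ι κ n 𝕜 : Type*} [Fintype ι] [Fintype κ] [Fintype n] [RCLike 𝕜]

theorem eq_zero_of_sum_mul_conjTranspose_eq_zero {M : ι → Matrix n n 𝕜}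
    (h : ∑ i, M i * (M i)ᴴ = 0) (i : ι) : M i = 0 := by
  open scoped MatrixOrder in
  have hnonneg : ∀ j ∈ Finset.univ, 0 ≤ M j * (M j)ᴴ := fun j _ =>
    (posSemidef_self_mul_conjTranspose (M j)).nonneg
  exact self_mul_conjTranspose_eq_zero.mp
    ((Finset.sum_eq_zero_iff_of_nonneg hnonneg).mp h i (Finset.mem_univ i))

variable [DecidableEq n]

theorem commute_of_forall_krausDual_eq_self {F : ι → Matrix n n 𝕜}
    {A : StarSubalgebra 𝕜 (Matrix n n 𝕜)} (hA : ∀ b ∈ A, krausDual F b = b)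
    {a : Matrix n n 𝕜} (ha : a ∈ A) (i : ι) : Commute (F i) a := by
  have hcomm : ∀ b ∈ A, (F i)ᴴ * b = b * (F i)ᴴ := fun b hb => by
    have hbs : bᴴ ∈ A := star_mem hb
    have hsum := sum_commutator_mul_conjTranspose F b
    rw [hA _ (mul_mem hb hbs), hA b hb, hA _ hbs, hA 1 (one_mem A), mul_one] at hsum
    exact sub_eq_zero.mp (eq_zero_of_sum_mul_conjTranspose_eq_zero (by rw [hsum]; abel) i)
  have h := congrArg conjTranspose (hcomm aᴴ (star_mem ha))
  simp only [conjTranspose_mul, conjTranspose_conjTranspose] at h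
  exact h.symm

theorem commute_conjTranspose_mul_of_krausDual_krausDual_eq_self
    {E : ι → Matrix n n 𝕜} {K : κ → Matrix n n 𝕜} (hK : ∑ l, (K l)ᴴ * K l = 1)
    {A : StarSubalgebra 𝕜 (Matrix n n 𝕜)} (hA : ∀ b ∈ A, krausDual E (krausDual K b) = b)
    {a : Matrix n n 𝕜} (ha : a ∈ A) (i j : ι) : Commute a ((E i)ᴴ * E j) := by
  have hF : ∀ b ∈ A, ∀ p : κ × ι, Commute (K p.1 * E p.2) b :=
    fun b hb => commute_of_forall_krausDual_eq_self
      (fun b hb => krausDual_krausDual K E b ▸ hA b hb) hb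
  have hdecomp : (E i)ᴴ * E j = ∑ l, (K l * E i)ᴴ * (K l * E j) := by
    calc (E i)ᴴ * E j = (E i)ᴴ * (∑ l, (K l)ᴴ * K l) * E j := by rw [hK, mul_one]
      _ = _ := by simp only [Finset.mul_sum, Finset.sum_mul, conjTranspose_mul, mul_assoc]
  rw [hdecomp]
  refine Commute.sum_right _ _ _ fun l _ => Commute.mul_right ?_ (hF a ha (l, j)).symm
  simpa only [star_eq_conjTranspose, conjTranspose_conjTranspose] using
    (hF aᴴ (star_mem ha) (l, i)).star_star.symm

theorem Matrix.PosSemidef.exists_pseudoinverse_sqrt {Q : Matrix n n 𝕜} (hQ : Q.PosSemidef) :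
    ∃ G : Matrix n n 𝕜, Gᴴ = G ∧ (G * Q * G) * (G * Q * G) = G * Q * G ∧
      G * Q * G * Q = Q ∧ ∀ X, Commute Q X → Commute G X := by
  have hQsa : IsSelfAdjoint Q := hQ.1
  have hc (f : ℝ → ℝ) : ContinuousOn f (spectrum ℝ Q) := Q.finite_real_spectrum.continuousOn f
  -- `(√0)⁻¹ = 0`, so `G * Q * G` is `cfc (x ↦ x * x⁻¹) Q`, the projection onto the range of `Q`.
  set G := cfc (fun x : ℝ => (√x)⁻¹) Q
  have hP : G * Q * G = cfc (fun x : ℝ => x * x⁻¹) Q := by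
    conv_lhs => rw [← cfc_id' ℝ Q]
    rw [← cfc_mul _ _ _ (hc _) (hc _), ← cfc_mul _ _ _ (hc _) (hc _)]
    refine cfc_congr fun x hx => ?_
    have hx0 : 0 ≤ x := by
      open scoped MatrixOrder in exact spectrum_nonneg_of_nonneg hQ.nonneg hx
    rw [mul_comm, ← mul_assoc, ← mul_inv, Real.mul_self_sqrt hx0, mul_comm]
  refine ⟨G, (cfc_predicate (R := ℝ) _ Q : IsSelfAdjoint G), ?_, ?_, fun X hX => hX.cfc_real _⟩
  · rw [hP, ← cfc_mul _ _ _ (hc _) (hc _)]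
    refine cfc_congr fun x (_ : x ∈ spectrum ℝ Q) => ?_
    rcases eq_or_ne x 0 with rfl | h <;> simp [*]
  · rw [hP]
    nth_rw 2 [← cfc_id' ℝ Q]
    rw [← cfc_mul _ _ _ (hc _) (hc _)]
    refine (cfc_congr fun x _ => ?_).trans (cfc_id' ℝ Q)
    rcases eq_or_ne x 0 with rfl | h <;> simp [*]

theorem mul_eq_self_of_mul_krausMap_one {E : ι → Matrix n n 𝕜} {P : Matrix n n 𝕜}
    (hP : Pᴴ = P) (hPQ : P * krausMap E 1 = krausMap E 1) (i : ι) : P * E i = E i := by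
  have hsum : ∑ i, ((1 - P) * E i) * ((1 - P) * E i)ᴴ = 0 := by
    calc ∑ i, ((1 - P) * E i) * ((1 - P) * E i)ᴴ = (1 - P) * krausMap E 1 * (1 - P) := by
          simp only [krausMap, conjTranspose_mul, conjTranspose_sub, conjTranspose_one, hP,
            mul_one, Finset.mul_sum, Finset.sum_mul, mul_assoc]
      _ = 0 := by rw [sub_mul, one_mul, hPQ, sub_self, zero_mul]
  simpa [sub_mul, sub_eq_zero, eq_comm] using eq_zero_of_sum_mul_conjTranspose_eq_zero hsum i

theorem exists_kraus_krausDual_krausDual_eq_self {k : ℕ} {E : Fin k → Matrix n n 𝕜}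
    (hE : ∑ i, (E i)ᴴ * E i = 1) :
    ∃ K : Fin (k + 1) → Matrix n n 𝕜, ∑ l, (K l)ᴴ * K l = 1 ∧
      ∀ a, (∀ i j, Commute a ((E i)ᴴ * E j)) → krausDual E (krausDual K a) = a := by
  set Q := krausMap E 1
  have hQ : Q.PosSemidef := posSemidef_sum _ fun i _ => by
    simpa only [mul_one] using posSemidef_self_mul_conjTranspose (E i)
  obtain ⟨G, hG, hPP, hPQ, hGcomm⟩ := hQ.exists_pseudoinverse_sqrt
  set P := G * Q * G
  have hPh : Pᴴ = P := by simp only [P, conjTranspose_mul, hG, hQ.1.eq, mul_assoc]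
  have hPE := mul_eq_self_of_mul_krausMap_one hPh hPQ
  have hQGG : Q * (G * G) = P := by rw [← mul_assoc, ← (hGcomm Q (Commute.refl Q)).eq]
  have hGQG : ∑ i, ((E i)ᴴ * G)ᴴ * ((E i)ᴴ * G) = P := by
    simp only [P, Q, krausMap, conjTranspose_mul, conjTranspose_conjTranspose, hG, mul_one,
      Finset.mul_sum, Finset.sum_mul, mul_assoc]
  refine ⟨Fin.cons (1 - P) fun i => (E i)ᴴ * G, ?_, fun a ha => ?_⟩
  · rw [Fin.sum_univ_succ]
    simp only [Fin.cons_zero, Fin.cons_succ, hGQG, conjTranspose_sub, conjTranspose_one, hPh,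
      sub_mul, mul_sub, one_mul, mul_one, hPP]
    abel
  · have hK : krausDual (Fin.cons (1 - P) fun i => (E i)ᴴ * G) a =
        (1 - P)ᴴ * a * (1 - P) + krausMap E a * (G * G) := by
      have hGN : Commute G (krausMap E a) := hGcomm _ (commute_krausMap_krausMap_one ha).symm
      rw [krausDual, Fin.sum_univ_succ, ← mul_assoc, ← hGN.eq]
      simp only [Fin.cons_zero, Fin.cons_succ, krausMap, conjTranspose_mul,
        conjTranspose_conjTranspose, hG, Finset.mul_sum, Finset.sum_mul, mul_assoc]
    have hvanish : krausDual E ((1 - P)ᴴ * a * (1 - P)) = 0 := by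
      refine Finset.sum_eq_zero fun i _ => ?_
      have : (1 - P) * E i = 0 := by rw [sub_mul, one_mul, hPE, sub_self]
      rw [show (E i)ᴴ * ((1 - P)ᴴ * a * (1 - P)) * E i = ((1 - P) * E i)ᴴ * a * ((1 - P) * E i) by
        simp only [conjTranspose_mul, mul_assoc], this, mul_zero]
    rw [hK, krausDual_add, hvanish, zero_add, krausDual_krausMap_mul ha, hQGG]
    simp only [krausDual, mul_assoc, hPE, hE, mul_one]

end Positivity

/-- exact correctability of an algebra iff commutation with all
`E_i† E_j`; equivalently containment in the commutant they generate. -/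
theorem stmt_7 {d k : ℕ} (E : Fin k → Mat d) (hE : ∑ i, (E i)ᴴ * E i = 1)
    (N : Mat d → Mat d) (hN : ∀ ρ, N ρ = ∑ i, E i * ρ * (E i)ᴴ)
    (A : StarSubalgebra ℂ (Mat d)) :
    ((∃ R : Mat d → Mat d, IsCPTP R ∧
        ∀ a ∈ A, ∀ ρ : Mat d, (R (N ρ) * a).trace = (ρ * a).trace) ↔
      (∀ a ∈ A, ∀ i j, a * ((E i)ᴴ * E j) = ((E i)ᴴ * E j) * a)) ∧
    ((∀ a ∈ A, ∀ i j, a * ((E i)ᴴ * E j) = ((E i)ᴴ * E j) * a) ↔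
      (A : Set (Mat d)) ⊆ commutant {X | ∃ i j, X = (E i)ᴴ * E j}) := by
  refine ⟨⟨?_, fun hcomm => ?_⟩, ⟨?_, ?_⟩⟩
  · rintro ⟨R, ⟨κ, K, hR, hK⟩, hRN⟩ a ha i j
    refine commute_conjTranspose_mul_of_krausDual_krausDual_eq_self hK (fun b hb => ?_) ha i j
    rw [← forall_trace_krausMap_krausMap_mul_eq_iff]
    intro ρ
    rw [← hRN b hb ρ, hR, hN]
    rfl
  · obtain ⟨K, hK, hKE⟩ := exists_kraus_krausDual_krausDual_eq_self hE
    refine ⟨krausMap K, ⟨k + 1, K, fun _ => rfl, hK⟩, fun a ha ρ => ?_⟩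
    rw [hN]
    exact (forall_trace_krausMap_krausMap_mul_eq_iff K E a).mpr (hKE a (hcomm a ha)) ρ
  · rintro h a ha _ ⟨i, j, rfl⟩
    exact (h a ha i j).symm
  · exact fun h a ha i j => (h ha _ ⟨i, j, rfl⟩).symm
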